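/- arXiv:2412.10903 — 5 statements merged into one kernel-verified Lean document; each statement's English description precedes it below -/
import Mathlib

section
/- For any vertex-transitive finite graph Γ (simple, undirected), the product of its clique number and its independence number is at most the number of vertices: ω(Γ)·α(Γ) ≤ |V(Γ)|. -/
/-!
Let `K` be a maximum clique and `I` a maximum independent set. An automorphism `g` maps at most
one vertex of `K` into `I`. On the other hand, the automorphism group acts transitively, so for
each pair `(k, i)` the same proportion `1 / |V|` of automorphisms sends `k` to `i`; averaging over
the group, an automorphism maps on average `|K| |I| / |V|` vertices of `K` into `I`.
Hence `|K| |I| / |V| ≤ 1`.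
-/

open SimpleGraph

/-- The independence number of a graph: the clique number of its complement. -/
noncomputable def SimpleGraph.indepNumCompl {V : Type*} (G : SimpleGraph V) : ℕ :=
  Gᶜ.cliqueNum

/-- A graph is vertex-transitive if its automorphism group is transitive on vertices. -/
def SimpleGraph.IsVertexTransitive {V : Type*} (G : SimpleGraph V) : Prop :=
  ∀ u v : V, ∃ φ : G ≃g G, φ u = v

open Finset

namespace MulAction

variable {H X : Type*} [Group H] [MulAction H X] [IsPretransitive H X] [Fintype H] [DecidableEq X]

theorem card_filter_smul_eq_eq_card_filter_smul_eq_self (a b : X) :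
    #{g : H | g • a = b} = #{g : H | g • a = a} := by
  obtain ⟨h, rfl⟩ := exists_smul_eq H a b
  refine card_nbij' (h⁻¹ * ·) (h * ·) ?_ ?_ ?_ ?_ <;> intro g hg <;>
    simp_all [mul_smul]

variable [Fintype X]

theorem card_filter_smul_eq_mul_card (a b : X) :
    #{g : H | g • a = b} * Fintype.card X = Fintype.card H := by
  calc #{g : H | g • a = b} * Fintype.card X
      = ∑ x : X, #{g : H | g • a = x} := by
        simp [card_filter_smul_eq_eq_card_filter_smul_eq_self (H := H) a, mul_comm]
    _ = Fintype.card H :=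
        (card_eq_sum_card_fiberwise fun g _ => mem_univ (g • a)).symm

theorem card_filter_smul_mem_mul_card (a : X) (B : Finset X) :
    #{g : H | g • a ∈ B} * Fintype.card X = #B * Fintype.card H := by
  have hfib : #{g : H | g • a ∈ B} = ∑ b ∈ B, #{g : H | g • a = b} := by
    rw [card_eq_sum_card_fiberwise (s := {g : H | g • a ∈ B}) (t := B) (f := (· • a))
      fun g hg => by simpa using hg]
    refine sum_congr rfl fun b hb => congrArg card ?_
    ext g
    simp +contextual [hb]
  rw [hfib, sum_mul, sum_congr rfl fun b _ => card_filter_smul_eq_mul_card a b, sum_const,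
    smul_eq_mul]

theorem sum_card_filter_smul_mem_mul_card (A B : Finset X) :
    (∑ g : H, #{a ∈ A | g • a ∈ B}) * Fintype.card X = #A * #B * Fintype.card H := by
  have hswap : ∑ g : H, #{a ∈ A | g • a ∈ B} = ∑ a ∈ A, #{g : H | g • a ∈ B} :=
    sum_card_bipartiteAbove_eq_sum_card_bipartiteBelow (fun g a => g • a ∈ B)
  rw [hswap, sum_mul, sum_congr rfl fun a _ => card_filter_smul_mem_mul_card a B, sum_const,
    smul_eq_mul, mul_assoc]

theorem card_mul_card_le_card_of_card_filter_smul_mem_le_one {A B : Finset X}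
    (h : ∀ g : H, #{a ∈ A | g • a ∈ B} ≤ 1) : #A * #B ≤ Fintype.card X := by
  refine Nat.le_of_mul_le_mul_right ?_ (Fintype.card_pos (α := H))
  calc #A * #B * Fintype.card H
      = (∑ g : H, #{a ∈ A | g • a ∈ B}) * Fintype.card X :=
        (sum_card_filter_smul_mem_mul_card A B).symm
    _ ≤ (∑ _g : H, 1) * Fintype.card X := by gcongr with g; exact h g
    _ = Fintype.card X * Fintype.card H := by simp [mul_comm]

end MulAction

namespace SimpleGraph

variable {V W : Type*} {G : SimpleGraph V} {G' : SimpleGraph W}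

theorem IsClique.card_filter_map_mem_le_one [DecidableEq W] {s : Finset V} {t : Finset W}
    (hs : G.IsClique (s : Set V)) (ht : G'ᶜ.IsClique (t : Set W)) (φ : G →g G') :
    #{a ∈ s | φ a ∈ t} ≤ 1 := by
  refine card_le_one.2 fun a ha b hb => by_contra fun hab => ?_
  simp only [mem_filter] at ha hb
  have hadj : G'.Adj (φ a) (φ b) := φ.map_adj (hs ha.1 hb.1 hab)
  exact (ht ha.2 hb.2 hadj.ne).2 hadj

theorem IsVertexTransitive.isPretransitive (hG : G.IsVertexTransitive) :
    MulAction.IsPretransitive (G ≃g G) V :=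
  ⟨hG⟩

end SimpleGraph

theorem stmt_0 {V : Type*} [Fintype V] (G : SimpleGraph V)
    (hvt : G.IsVertexTransitive) :
    G.cliqueNum * G.indepNumCompl ≤ Fintype.card V := by
  classical
  have := hvt.isPretransitive
  have : Fintype (G ≃g G) := Fintype.ofInjective _ RelIso.toEquiv_injective
  obtain ⟨K, hK⟩ := G.exists_isNClique_cliqueNum
  obtain ⟨I, hI⟩ := Gᶜ.exists_isNClique_cliqueNum
  rw [indepNumCompl, ← hK.card_eq, ← hI.card_eq]
  exact MulAction.card_mul_card_le_card_of_card_filter_smul_mem_le_one (H := G ≃g G)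
    fun φ => hK.isClique.card_filter_map_mem_le_one hI.isClique φ.toHom
end

section
/- For d, m > 1, the Hamming graph H(d,m) is non-synchronizing: it is neither null nor complete, and its clique number equals its chromatic number. -/
/-!
Fixing all coordinates but one gives a clique of size `m`, while colouring a word by the sum
of its coordinates in `ℤ/m` is proper, because adjacent words differ in exactly one summand.
Hence `ω = χ = m`. The graph is not complete because two constant words with different values
are at distance `d > 1`.
-/

open SimpleGraph

/-- The Hamming graph `H(d,m)`: vertices are `d`-tuples over an `m`-set, adjacent
exactly when they differ in exactly one coordinate. -/
def hammingGraph (d m : ℕ) : SimpleGraph (Fin d → Fin m) where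
  Adj x y := hammingDist x y = 1
  symm := ⟨fun x y h => (hammingDist_comm y x).trans h⟩
  loopless := ⟨fun x h => absurd ((hammingDist_self x).symm.trans h) (by norm_num)⟩

section HammingDist

variable {ι β : Type*} [Fintype ι] [DecidableEq β]

theorem hammingDist_eq_one_iff {x y : ι → β} :
    hammingDist x y = 1 ↔ ∃ j, x j ≠ y j ∧ ∀ i ≠ j, x i = y i := by
  simp only [hammingDist, Finset.card_eq_one, Finset.eq_singleton_iff_unique_mem,
    Finset.mem_filter, Finset.mem_univ, true_and]
  refine exists_congr fun j => and_congr_right fun _ => forall_congr' fun i => ?_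
  rw [not_imp_comm]

theorem hammingDist_update_update [DecidableEq ι] (z : ι → β) (j : ι) {a b : β} (h : a ≠ b) :
    hammingDist (Function.update z j a) (Function.update z j b) = 1 :=
  hammingDist_eq_one_iff.2 ⟨j, by simpa, fun i hi => by simp [hi]⟩

theorem hammingDist_const_const {a b : β} (h : a ≠ b) :
    hammingDist (fun _ : ι => a) (fun _ => b) = Fintype.card ι := by
  simp [hammingDist, h]

theorem sum_ne_sum_of_hammingDist_eq_one [AddCancelCommMonoid β] {x y : ι → β}
    (h : hammingDist x y = 1) : ∑ i, x i ≠ ∑ i, y i := by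
  classical
  obtain ⟨j, hj, hrest⟩ := hammingDist_eq_one_iff.1 h
  rw [Fintype.sum_eq_add_sum_compl j, Fintype.sum_eq_add_sum_compl j y,
    Finset.sum_congr rfl fun i hi => hrest i (by simpa using hi)]
  exact fun h => hj (add_right_cancel h)

end HammingDist

theorem SimpleGraph.cliqueNum_eq_chromaticNumber_of_isNClique_of_colorable {V : Type*} [Finite V]
    {G : SimpleGraph V} {n : ℕ} {s : Finset V} (hs : G.IsNClique n s) (hc : G.Colorable n) :
    (G.cliqueNum : ℕ∞) = G.chromaticNumber := by
  refine le_antisymm cliqueNum_le_chromaticNumber (hc.chromaticNumber_le.trans ?_)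
  exact_mod_cast hs.card_eq ▸ hs.isClique.card_le_cliqueNum

namespace hammingGraph

variable {d m : ℕ}

theorem adj_update (z : Fin d → Fin m) (j : Fin d) {a b : Fin m} (h : a ≠ b) :
    (hammingGraph d m).Adj (Function.update z j a) (Function.update z j b) :=
  hammingDist_update_update z j h

theorem isNClique_map_update (z : Fin d → Fin m) (j : Fin d) :
    (hammingGraph d m).IsNClique m
      (Finset.univ.map ⟨Function.update z j, Function.update_injective z j⟩) := by
  refine ⟨?_, by simp⟩
  rw [Finset.coe_map, Finset.coe_univ, Set.image_univ]
  rintro _ ⟨a, rfl⟩ _ ⟨b, rfl⟩ hab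
  exact adj_update z j fun h => hab (h ▸ rfl)

theorem colorable [NeZero m] : (hammingGraph d m).Colorable m :=
  ⟨Coloring.mk (fun x => ∑ i, x i) sum_ne_sum_of_hammingDist_eq_one⟩

theorem ne_bot (hd : 0 < d) (hm : 1 < m) : hammingGraph d m ≠ ⊥ :=
  ne_bot_iff_exists_adj.2 ⟨_, _, adj_update (fun _ => ⟨0, by omega⟩) ⟨0, hd⟩
    (a := ⟨0, by omega⟩) (b := ⟨1, hm⟩) (by simp [Fin.ext_iff])⟩

theorem ne_top (hd : 1 < d) (hm : 1 < m) : hammingGraph d m ≠ ⊤ := by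
  have : Nonempty (Fin d) := ⟨⟨0, by omega⟩⟩
  have h01 : (⟨0, by omega⟩ : Fin m) ≠ ⟨1, hm⟩ := by simp [Fin.ext_iff]
  intro htop
  have hadj : (hammingGraph d m).Adj (fun _ => ⟨0, by omega⟩) (fun _ => ⟨1, hm⟩) :=
    htop ▸ Function.const_injective.ne h01
  have : d = 1 := by simpa [hammingGraph, hammingDist_const_const h01] using hadj
  omega

end hammingGraph

/-- For `d, m > 1`, the Hamming graph `H(d,m)` is non-synchronizing: it is neither
null nor complete, and its clique number equals its chromatic number. -/
theorem stmt_4 (d m : ℕ) (hd : 1 < d) (hm : 1 < m) :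
    hammingGraph d m ≠ ⊥ ∧ hammingGraph d m ≠ ⊤ ∧
      ((hammingGraph d m).cliqueNum : ℕ∞) = (hammingGraph d m).chromaticNumber := by
  have : NeZero m := NeZero.of_gt hm
  refine ⟨hammingGraph.ne_bot (by omega) hm, hammingGraph.ne_top hd hm, ?_⟩
  exact cliqueNum_eq_chromaticNumber_of_isNClique_of_colorable
    (hammingGraph.isNClique_map_update 0 ⟨0, by omega⟩) hammingGraph.colorable
end

section
/- Every transitive permutation group of prime degree is separating: for every graph Γ on the permutation domain preserved by the group, if Γ is neither null nor complete then ω(Γ)·α(Γ) ≠ |V(Γ)|. -/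
open SimpleGraph

theorem SimpleGraph.eq_top_of_cliqueNum_eq_card {V : Type*} [Fintype V] {G : SimpleGraph V}
    (h : G.cliqueNum = Fintype.card V) : G = ⊤ := by
  obtain ⟨s, hs⟩ := G.exists_isNClique_cliqueNum
  have hs_univ : s = Finset.univ := Finset.eq_univ_of_card s (hs.card_eq.trans h)
  rw [← isClique_univ, ← Finset.coe_univ, ← hs_univ]
  exact hs.isClique

theorem stmt_7_general {Ω : Type*} [Fintype Ω]
    (hp : (Fintype.card Ω).Prime)
    (Γ : SimpleGraph Ω)
    (hnn : Γ ≠ ⊥) (hnc : Γ ≠ ⊤) :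
    Γ.cliqueNum * Γ.indepNumCompl ≠ Fintype.card Ω := by
  intro h
  rcases hp.eq_one_or_self_of_dvd _ (Dvd.intro _ h) with hω | hω
  · rw [hω, one_mul] at h
    exact hnn (compl_eq_top.mp (eq_top_of_cliqueNum_eq_card (G := Γᶜ) h))
  · exact hnc (eq_top_of_cliqueNum_eq_card hω)

/-- Every transitive permutation group of prime degree is separating: for every graph
on the permutation domain preserved by the group, if the graph is neither null nor
complete then `ω(Γ)·α(Γ) ≠ |Ω|`. -/
theorem stmt_7 {Ω : Type*} [Fintype Ω] (G : Subgroup (Equiv.Perm Ω))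
    (htrans : ∀ a b : Ω, ∃ g ∈ G, g a = b)
    (hp : (Fintype.card Ω).Prime)
    (Γ : SimpleGraph Ω)
    (hinv : ∀ g ∈ G, ∀ a b : Ω, Γ.Adj (g a) (g b) ↔ Γ.Adj a b)
    (hnn : Γ ≠ ⊥) (hnc : Γ ≠ ⊤) :
    Γ.cliqueNum * Γ.indepNumCompl ≠ Fintype.card Ω :=
  stmt_7_general hp Γ hnn hnc
end

section
/- Let k > 1 divide n with n/k > 2, and let Γ be the graph whose vertices are the partitions of {1,...,n} into parts of size k, with two partitions adjacent exactly when they share no common part. Then Γ is neither null nor complete and χ(Γ) = ω(Γ); i.e., Γ is non-synchronizing. -/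
/-!
Adjacent partitions share no part, so colouring a partition by its part through `0` (with `0`
removed) is proper with `(n - 1).choose (k - 1)` colours. A clique of that size is Baranyai's
decomposition of all `k`-subsets of `Fin n` into partitions. It is built by adding the points
`0, …, n - 1` one at a time to `(n - 1).choose (k - 1)` families of partial blocks, keeping every
block count equal to the number of `k`-sets it can grow into. When a point is added, the deficits
`k - #S` give a fractional matching of families to blocks, so Hall's theorem picks one block per
family to receive the point, with each block picked exactly as often as the counts demand.
-/

open SimpleGraph

/-- The type of partitions of `{1,...,n}` into parts of size `k`, encoded as finsets
of `k`-subsets of `Fin n` such that every point lies in exactly one part. -/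
def KPartition (n k : ℕ) : Type :=
  {P : Finset (Finset (Fin n)) // (∀ s ∈ P, s.card = k) ∧
    ∀ x : Fin n, ∃! s, s ∈ P ∧ x ∈ s}

noncomputable instance (n k : ℕ) : Fintype (KPartition n k) := by
  unfold KPartition; exact Fintype.ofFinite _

/-- The graph whose vertices are the partitions of `{1,...,n}` into `k`-subsets, with
two partitions adjacent exactly when they have no part in common. -/
def kPartitionGraph (n k : ℕ) : SimpleGraph (KPartition n k) where
  Adj P Q := P ≠ Q ∧ Disjoint P.1 Q.1
  symm := ⟨fun P Q h => ⟨h.1.symm, h.2.symm⟩⟩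
  loopless := ⟨fun P h => h.1 rfl⟩

open Finset

def initSeg (n m : ℕ) : Finset (Fin n) := {x | x.val < m}

lemma card_initSeg {n m : ℕ} (hm : m ≤ n) : #(initSeg n m) = m := by
  simp [initSeg, Fin.card_filter_val_lt, hm]

lemma initSeg_zero (n : ℕ) : initSeg n 0 = ∅ := by
  ext; simp [initSeg]

lemma initSeg_self (n : ℕ) : initSeg n n = univ := by
  ext x; simp [initSeg]

lemma mk_notMem_initSeg {n m : ℕ} (hm : m < n) : (⟨m, hm⟩ : Fin n) ∉ initSeg n m := by
  simp [initSeg]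

lemma initSeg_succ {n m : ℕ} (hm : m < n) :
    initSeg n (m + 1) = insert ⟨m, hm⟩ (initSeg n m) := by
  ext x; simp [initSeg, Fin.ext_iff]; omega

lemma Multiset.existsUnique_mem_of_nodup_bind {α : Type*} {s : Multiset (Finset α)}
    (hs : (s.bind Finset.val).Nodup) {x : α} (hx : x ∈ s.bind Finset.val) :
    ∃! t, t ∈ s ∧ x ∈ t := by
  obtain ⟨t, ht, hxt⟩ := Multiset.mem_bind.1 hx
  refine ⟨t, ⟨ht, hxt⟩, fun u ⟨hu, hxu⟩ => ?_⟩
  by_contra hne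
  obtain ⟨r, rfl⟩ := Multiset.exists_cons_of_mem ht
  obtain ⟨r', rfl⟩ := Multiset.exists_cons_of_mem ((Multiset.mem_cons.1 hu).resolve_left hne)
  rw [Multiset.cons_bind, Multiset.cons_bind, ← add_assoc, Multiset.nodup_add,
    Multiset.nodup_add] at hs
  exact Multiset.disjoint_left.1 hs.1.2.2 hxt hxu

lemma card_fiber_eq_of_le {ι α : Type*} [Fintype ι] [DecidableEq α] {σ : ι → α}
    {E : Finset α} {d : α → ℕ} (hσ : ∀ i, σ i ∈ E) (hle : ∀ a ∈ E, #{i | σ i = a} ≤ d a)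
    (hsum : ∑ a ∈ E, d a = Fintype.card ι) {a : α} (ha : a ∈ E) :
    #{i | σ i = a} = d a := by
  have hfib : ∑ a ∈ E, #{i | σ i = a} = ∑ a ∈ E, d a := by
    rw [hsum, ← card_univ, card_eq_sum_card_fiberwise fun i _ => hσ i]
  exact (sum_eq_sum_iff_of_le hle).1 hfib a ha

lemma sum_count_cons_erase_add_card_fiber {ι α : Type*} [Fintype ι] [DecidableEq α]
    (f : ι → Multiset α) (σ τ : ι → α) (hσ : ∀ i, σ i ∈ f i) (a : α) :
    ∑ i, (τ i ::ₘ (f i).erase (σ i)).count a + #{i | σ i = a} =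
      ∑ i, (f i).count a + #{i | τ i = a} := by
  simp only [card_filter, ← sum_add_distrib]
  refine sum_congr rfl fun i _ => ?_
  conv_rhs => rw [← Multiset.cons_erase (hσ i)]
  simp only [Multiset.count_cons, eq_comm (a := a)]
  ring

lemma Nat.choose_pred_mul_div_eq_choose {n k : ℕ} (hk : 0 < k) (hdvd : k ∣ n) :
    (n - 1).choose (k - 1) * (n / k) = n.choose k := by
  obtain ⟨q, rfl⟩ := hdvd
  rcases Nat.eq_zero_or_pos q with rfl | hq
  · simp [Nat.choose_eq_zero_of_lt hk]
  obtain ⟨a, ha⟩ : ∃ a, k * q = a + 1 := ⟨k * q - 1, by have := Nat.mul_pos hk hq; omega⟩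
  obtain ⟨b, rfl⟩ : ∃ b, k = b + 1 := ⟨k - 1, by omega⟩
  refine Nat.eq_of_mul_eq_mul_right hk ?_
  rw [Nat.mul_div_cancel_left q hk, ha, Nat.add_sub_cancel, Nat.add_sub_cancel,
    ← Nat.add_one_mul_choose_eq, ← ha]
  ring

lemma Finset.map_swap_eq_self {α : Type*} [DecidableEq α] {s : Finset α} {u v : α}
    (hu : u ∉ s) (hv : v ∉ s) : s.map (Equiv.swap u v).toEmbedding = s := by
  ext y
  rw [mem_map_equiv, Equiv.symm_swap, Equiv.swap_apply_def]
  split_ifs <;> subst_vars <;> tauto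

lemma SimpleGraph.chromaticNumber_eq_cliqueNum_of_isNClique {V : Type*} [Fintype V]
    {G : SimpleGraph V} {c : ℕ} {s : Finset V} (hc : G.Colorable c) (hs : G.IsNClique c s) :
    G.chromaticNumber = G.cliqueNum := by
  refine le_antisymm (hc.chromaticNumber_le.trans ?_) G.cliqueNum_le_chromaticNumber
  exact_mod_cast hs.card_eq ▸ hs.isClique.card_le_cliqueNum

/-- Stage `m` of Baranyai's construction: each `f i` splits `initSeg n m` into `n / k` blocks
of size at most `k` (blocks may be empty or repeated), and a set `S` occurs as a block exactly as
often as there are `k`-subsets of `Fin n` whose trace on `initSeg n m` is `S`. -/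
structure IsBaranyaiSystem (n k m : ℕ) {ι : Type*} [Fintype ι]
    (f : ι → Multiset (Finset (Fin n))) : Prop where
  card_eq (i : ι) : Multiset.card (f i) = n / k
  bind_eq (i : ι) : (f i).bind Finset.val = (initSeg n m).val
  card_le (i : ι) : ∀ S ∈ f i, #S ≤ k
  sum_count (S : Finset (Fin n)) :
    S ⊆ initSeg n m → #S ≤ k → ∑ i, (f i).count S = (n - m).choose (k - #S)

/-- The number of `k`-subsets of `Fin n` whose trace on `initSeg n (m + 1)` is `insert m S`. -/
def extensionCount (n k m : ℕ) (S : Finset (Fin n)) : ℕ := (n - m - 1).choose (k - #S - 1)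

lemma sum_extensionCount {n k m : ℕ} (hk : 0 < k) (hm : m < n) :
    ∑ S ∈ (range k).biUnion (powersetCard · (initSeg n m)), extensionCount n k m S =
      (n - 1).choose (k - 1) := by
  rw [sum_biUnion ((initSeg n m).pairwise_disjoint_powersetCard.set_pairwise _)]
  have hterm : ∀ j ∈ range k, ∑ S ∈ powersetCard j (initSeg n m), extensionCount n k m S =
      m.choose j * (n - m - 1).choose (k - 1 - j) := by
    intro j hj
    rw [sum_congr rfl fun S hS => by rw [extensionCount, (mem_powersetCard.1 hS).2],
      sum_const, card_powersetCard, card_initSeg hm.le, smul_eq_mul, Nat.sub_right_comm k]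
  have vandermonde := Nat.add_choose_eq m (n - m - 1) (k - 1)
  rw [Nat.sum_antidiagonal_eq_sum_range_succ_mk, Nat.succ_eq_add_one, Nat.sub_add_cancel hk,
    show m + (n - m - 1) = n - 1 by omega] at vandermonde
  rw [sum_congr rfl hterm, vandermonde]

namespace IsBaranyaiSystem

variable {n k m : ℕ} {ι : Type*} [Fintype ι] {f : ι → Multiset (Finset (Fin n))}

lemma subset_initSeg (hf : IsBaranyaiSystem n k m f) {i : ι} {S : Finset (Fin n)}
    (hS : S ∈ f i) : S ⊆ initSeg n m := fun x hx => by
  have hx' : x ∈ (f i).bind Finset.val := Multiset.mem_bind.2 ⟨S, hS, hx⟩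
  rwa [hf.bind_eq] at hx'

lemma sum_card (hf : IsBaranyaiSystem n k m f) (hm : m ≤ n) (i : ι) :
    ((f i).map card).sum = m := by
  have h := congrArg Multiset.card (hf.bind_eq i)
  rwa [Multiset.card_bind, card_val, card_initSeg hm] at h

lemma sum_deficit (hf : IsBaranyaiSystem n k m f) (hdvd : k ∣ n) (hm : m ≤ n) (i : ι) :
    ((f i).map (k - #·)).sum = n - m := by
  have h : ((f i).map (k - #·)).sum + ((f i).map card).sum = n := by
    rw [← Multiset.sum_map_add,
      Multiset.map_congr rfl fun S hS => Nat.sub_add_cancel (hf.card_le i S hS),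
      Multiset.map_const', Multiset.sum_replicate, hf.card_eq, smul_eq_mul,
      Nat.div_mul_cancel hdvd]
  rw [hf.sum_card hm] at h
  omega

/-- Hall's condition for matching families to blocks that can still grow, where a block `S`
may be chosen `extensionCount n k m S` times: double count the deficits `k - #S`. -/
lemma card_le_sum_extensionCount [DecidableEq ι] (hf : IsBaranyaiSystem n k m f) (hdvd : k ∣ n)
    (hm : m < n) (W : Finset ι) :
    #W ≤ ∑ S ∈ W.biUnion fun i => {S ∈ (f i).toFinset | #S < k}, extensionCount n k m S := by
  set growable := fun i => {S ∈ (f i).toFinset | #S < k}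
  set V := W.biUnion growable
  have hV : ∀ S ∈ V, S ⊆ initSeg n m ∧ #S < k := fun S hS => by
    obtain ⟨i, -, hS⟩ := mem_biUnion.1 hS
    rw [mem_filter, Multiset.mem_toFinset] at hS
    exact ⟨hf.subset_initSeg hS.1, hS.2⟩
  refine Nat.le_of_mul_le_mul_left ?_ (Nat.sub_pos_of_lt hm)
  calc (n - m) * #W = ∑ i ∈ W, ((f i).map (k - #·)).sum := by
        rw [sum_congr rfl fun i _ => hf.sum_deficit hdvd hm.le i, sum_const, smul_eq_mul, mul_comm]
    _ = ∑ i ∈ W, ∑ S ∈ growable i, (f i).count S * (k - #S) := by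
        refine sum_congr rfl fun i _ => ?_
        rw [Finset.sum_multiset_map_count, sum_filter_of_ne fun S _ h => ?_]
        · rfl
        · exact Nat.sub_pos_iff_lt.1 (Nat.pos_of_ne_zero (right_ne_zero_of_mul h))
    _ ≤ ∑ i ∈ W, ∑ S ∈ V, (f i).count S * (k - #S) :=
        sum_le_sum fun i hi => sum_le_sum_of_subset (subset_biUnion_of_mem growable hi)
    _ ≤ ∑ S ∈ V, (∑ i, (f i).count S) * (k - #S) := by
        rw [sum_comm]
        exact sum_le_sum fun S _ => by
          rw [sum_mul]; exact sum_le_sum_of_subset (subset_univ W)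
    _ = ∑ S ∈ V, (n - m) * extensionCount n k m S := by
        refine sum_congr rfl fun S hS => ?_
        obtain ⟨hSm, hSk⟩ := hV S hS
        obtain ⟨a, ha⟩ : ∃ a, n - m = a + 1 := ⟨n - m - 1, by omega⟩
        obtain ⟨b, hb⟩ : ∃ b, k - #S = b + 1 := ⟨k - #S - 1, by omega⟩
        rw [hf.sum_count S hSm hSk.le, extensionCount, ha, hb, Nat.add_sub_cancel,
          Nat.add_sub_cancel, Nat.add_one_mul_choose_eq]
    _ = (n - m) * ∑ S ∈ V, extensionCount n k m S := (mul_sum ..).symm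

lemma exists_choice_card_fiber_le (hf : IsBaranyaiSystem n k m f) (hdvd : k ∣ n) (hm : m < n) :
    ∃ σ : ι → Finset (Fin n), (∀ i, σ i ∈ f i ∧ #(σ i) < k) ∧
      ∀ S, #{i | σ i = S} ≤ extensionCount n k m S := by
  classical
  let slots : ι → Finset ((_ : Finset (Fin n)) × ℕ) := fun i =>
    {S ∈ (f i).toFinset | #S < k}.sigma fun S => range (extensionCount n k m S)
  have hall : ∀ W : Finset ι, #W ≤ #(W.biUnion slots) := fun W => by
    have hW : W.biUnion slots =
        (W.biUnion fun i => {S ∈ (f i).toFinset | #S < k}).sigma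
          fun S => range (extensionCount n k m S) := by
      ext; simp [slots]; tauto
    rw [hW, card_sigma]
    simpa using hf.card_le_sum_extensionCount hdvd hm W
  obtain ⟨g, hg_inj, hg⟩ := (all_card_le_biUnion_card_iff_exists_injective slots).1 hall
  have hg' : ∀ i, ((g i).1 ∈ f i ∧ #(g i).1 < k) ∧ (g i).2 < extensionCount n k m (g i).1 :=
    fun i => by simpa [slots] using hg i
  refine ⟨fun i => (g i).1, fun i => (hg' i).1, fun S => ?_⟩
  rw [← card_range (extensionCount n k m S)]
  refine card_le_card_of_injOn (fun i => (g i).2) (fun i hi => ?_) fun i hi j hj hij => ?_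
  · simp only [coe_filter, Set.mem_ofPred_eq, mem_univ, true_and] at hi
    simpa [← hi] using (hg' i).2
  · simp only [coe_filter, Set.mem_ofPred_eq, mem_univ, true_and] at hi hj
    exact hg_inj (Sigma.ext (hi.trans hj.symm) (heq_of_eq hij))

lemma exists_choice_card_fiber_eq (hf : IsBaranyaiSystem n k m f) (hk : 0 < k) (hdvd : k ∣ n)
    (hm : m < n) (hι : Fintype.card ι = (n - 1).choose (k - 1)) :
    ∃ σ : ι → Finset (Fin n), (∀ i, σ i ∈ f i ∧ #(σ i) < k) ∧
      ∀ S ⊆ initSeg n m, #S < k → #{i | σ i = S} = extensionCount n k m S := by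
  obtain ⟨σ, hσ, hle⟩ := hf.exists_choice_card_fiber_le hdvd hm
  have hE : ∀ S, S ∈ (range k).biUnion (powersetCard · (initSeg n m)) ↔
      S ⊆ initSeg n m ∧ #S < k := by
    simp [and_comm]
  refine ⟨σ, hσ, fun S hSm hSk => card_fiber_eq_of_le (fun i => (hE _).2 ⟨?_, (hσ i).2⟩)
    (fun S _ => hle S) (by rw [sum_extensionCount hk hm, hι]) ((hE S).2 ⟨hSm, hSk⟩)⟩
  exact hf.subset_initSeg (hσ i).1

lemma sum_count_succ (hf : IsBaranyaiSystem n k m f) (hm : m < n) {σ : ι → Finset (Fin n)}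
    (hσ : ∀ i, σ i ∈ f i ∧ #(σ i) < k)
    (hfib : ∀ S ⊆ initSeg n m, #S < k → #{i | σ i = S} = extensionCount n k m S)
    (S : Finset (Fin n)) (hS : S ⊆ initSeg n (m + 1)) (hSk : #S ≤ k) :
    ∑ i, (insert ⟨m, hm⟩ (σ i) ::ₘ (f i).erase (σ i)).count S =
      (n - (m + 1)).choose (k - #S) := by
  classical
  set x : Fin n := ⟨m, hm⟩
  have hxσ : ∀ i, x ∉ σ i := fun i h => mk_notMem_initSeg hm (hf.subset_initSeg (hσ i).1 h)
  have hcount := sum_count_cons_erase_add_card_fiber f σ (fun i => insert x (σ i))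
    (fun i => (hσ i).1) S
  rw [initSeg_succ hm] at hS
  by_cases hxS : x ∈ S
  · have hS' : S.erase x ⊆ initSeg n m := subset_insert_iff.1 hS
    have hcardS : #(S.erase x) + 1 = #S := card_erase_add_one hxS
    have hold : ∑ i, (f i).count S = 0 := sum_eq_zero fun i _ => Multiset.count_eq_zero.2
      fun h => mk_notMem_initSeg hm (hf.subset_initSeg h hxS)
    have hσS : #{i | σ i = S} = 0 := card_eq_zero.2 <| filter_eq_empty_iff.2
      fun i _ h => hxσ i (h ▸ hxS)
    have hins : #{i | insert x (σ i) = S} = #{i | σ i = S.erase x} := by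
      congr 1; ext i
      simp only [mem_filter, mem_univ, true_and]
      constructor
      · rintro rfl; exact (erase_insert (hxσ i)).symm
      · rintro h; rw [h, insert_erase hxS]
    rw [hold, hσS, hins, hfib _ hS' (by omega), extensionCount, add_zero, zero_add] at hcount
    rw [hcount, show n - m - 1 = n - (m + 1) by omega, show k - #(S.erase x) - 1 = k - #S by omega]
  · have hS' : S ⊆ initSeg n m := (subset_insert_iff_of_notMem hxS).1 hS
    have hins : #{i | insert x (σ i) = S} = 0 := card_eq_zero.2 <| filter_eq_empty_iff.2
      fun i _ h => hxS (h ▸ mem_insert_self x (σ i))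
    rw [hins, add_zero, hf.sum_count S hS' hSk] at hcount
    rcases hSk.lt_or_eq with hSk | hSk
    · rw [hfib S hS' hSk, extensionCount,
        Nat.choose_eq_choose_pred_add (by omega : 0 < n - m) (by omega : 0 < k - #S)] at hcount
      rw [show n - (m + 1) = n - m - 1 by omega]
      omega
    · have hσS : #{i | σ i = S} = 0 := card_eq_zero.2 <| filter_eq_empty_iff.2
        fun i _ h => (hσ i).2.ne (h ▸ hSk)
      rw [hσS, add_zero, hSk, Nat.sub_self, Nat.choose_zero_right] at hcount
      rw [hcount, hSk, Nat.sub_self, Nat.choose_zero_right]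

lemma exists_succ (hf : IsBaranyaiSystem n k m f) (hk : 0 < k) (hdvd : k ∣ n) (hm : m < n)
    (hι : Fintype.card ι = (n - 1).choose (k - 1)) :
    ∃ f' : ι → Multiset (Finset (Fin n)), IsBaranyaiSystem n k (m + 1) f' := by
  obtain ⟨σ, hσ, hfib⟩ := hf.exists_choice_card_fiber_eq hk hdvd hm hι
  have hxσ : ∀ i, (⟨m, hm⟩ : Fin n) ∉ σ i :=
    fun i h => mk_notMem_initSeg hm (hf.subset_initSeg (hσ i).1 h)
  refine ⟨fun i => insert ⟨m, hm⟩ (σ i) ::ₘ (f i).erase (σ i),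
    ⟨fun i => ?_, fun i => ?_, fun i S hS => ?_, hf.sum_count_succ hm hσ hfib⟩⟩
  · rw [Multiset.card_cons, ← Multiset.card_cons (σ i), Multiset.cons_erase (hσ i).1,
      hf.card_eq]
  · rw [Multiset.cons_bind, insert_val_of_notMem (hxσ i), initSeg_succ hm,
      insert_val_of_notMem (mk_notMem_initSeg hm), ← hf.bind_eq i,
      ← Multiset.cons_erase (hσ i).1, Multiset.cons_bind, Multiset.erase_cons_head,
      Multiset.cons_add]
  · rcases Multiset.mem_cons.1 hS with rfl | hS
    · rw [card_insert_of_notMem (hxσ i)]; exact (hσ i).2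
    · exact hf.card_le i S (Multiset.mem_of_mem_erase hS)

lemma zero (hk : 0 < k) (hdvd : k ∣ n) (hι : Fintype.card ι = (n - 1).choose (k - 1)) :
    IsBaranyaiSystem n k 0 fun _ : ι => Multiset.replicate (n / k) ∅ where
  card_eq _ := Multiset.card_replicate _ _
  bind_eq _ := by simp [initSeg_zero, Multiset.bind, Multiset.join]
  card_le _ S hS := by simp [Multiset.eq_of_mem_replicate hS]
  sum_count S hS _ := by
    rw [initSeg_zero, subset_empty] at hS
    subst hS
    simp [hι, Nat.choose_pred_mul_div_eq_choose hk hdvd]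

lemma exists_of_le (hk : 0 < k) (hdvd : k ∣ n) (hι : Fintype.card ι = (n - 1).choose (k - 1))
    (hm : m ≤ n) : ∃ f : ι → Multiset (Finset (Fin n)), IsBaranyaiSystem n k m f := by
  induction m with
  | zero => exact ⟨_, zero hk hdvd hι⟩
  | succ m ih =>
    obtain ⟨f, hf⟩ := ih (by omega)
    exact hf.exists_succ hk hdvd (by omega) hι

lemma card_eq_of_mem (hf : IsBaranyaiSystem n k n f) {i : ι} {S : Finset (Fin n)}
    (hS : S ∈ f i) : #S = k := by
  refine (hf.card_le i S hS).eq_of_not_lt fun hSk => ?_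
  have h := hf.sum_count S (initSeg_self n ▸ subset_univ S) (hf.card_le i S hS)
  rw [Nat.sub_self, Nat.choose_eq_zero_of_lt (by omega : 0 < k - #S)] at h
  exact Multiset.count_ne_zero.2 hS (sum_eq_zero_iff.1 h i (mem_univ i))

lemma existsUnique_mem (hf : IsBaranyaiSystem n k n f) (i : ι) (x : Fin n) :
    ∃! S, S ∈ f i ∧ x ∈ S := by
  refine Multiset.existsUnique_mem_of_nodup_bind ?_ ?_ <;> rw [hf.bind_eq, initSeg_self]
  exacts [univ.nodup, mem_univ_val x]

lemma eq_of_mem_of_mem (hf : IsBaranyaiSystem n k n f) {i j : ι} {S : Finset (Fin n)}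
    (hi : S ∈ f i) (hj : S ∈ f j) : i = j := by
  classical
  by_contra hij
  have h := hf.sum_count S (initSeg_self n ▸ subset_univ S) (hf.card_le i S hi)
  rw [hf.card_eq_of_mem hi, Nat.sub_self, Nat.sub_self, Nat.choose_zero_right] at h
  have h2 := sum_le_sum_of_subset (f := fun l => (f l).count S) (subset_univ {i, j})
  rw [sum_pair hij, h] at h2
  have := Multiset.count_pos.2 hi
  have := Multiset.count_pos.2 hj
  omega

end IsBaranyaiSystem

@[simp] lemma kPartitionGraph_adj {n k : ℕ} {P Q : KPartition n k} :
    (kPartitionGraph n k).Adj P Q ↔ P ≠ Q ∧ Disjoint P.1 Q.1 := Iff.rfl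

namespace KPartition

variable {n k : ℕ}

noncomputable def partOf (P : KPartition n k) (x : Fin n) : Finset (Fin n) :=
  (P.2.2 x).exists.choose

lemma partOf_mem (P : KPartition n k) (x : Fin n) : P.partOf x ∈ P.1 :=
  (P.2.2 x).exists.choose_spec.1

lemma mem_partOf (P : KPartition n k) (x : Fin n) : x ∈ P.partOf x :=
  (P.2.2 x).exists.choose_spec.2

lemma card_partOf (P : KPartition n k) (x : Fin n) : #(P.partOf x) = k :=
  P.2.1 _ (P.partOf_mem x)

lemma eq_partOf {P : KPartition n k} {s : Finset (Fin n)} {x : Fin n} (hs : s ∈ P.1)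
    (hx : x ∈ s) : s = P.partOf x :=
  (P.2.2 x).unique ⟨hs, hx⟩ ⟨P.partOf_mem x, P.mem_partOf x⟩

def map (π : Equiv.Perm (Fin n)) (P : KPartition n k) : KPartition n k :=
  ⟨P.1.image (·.map π.toEmbedding), by
    refine ⟨fun t ht => ?_, fun x => ⟨(P.partOf (π.symm x)).map π.toEmbedding,
      ⟨mem_image_of_mem _ (P.partOf_mem _), mem_map_equiv.2 (P.mem_partOf _)⟩, ?_⟩⟩
    · obtain ⟨s, hs, rfl⟩ := mem_image.1 ht
      rw [card_map, P.2.1 s hs]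
    · rintro _ ⟨ht, hx⟩
      obtain ⟨s, hs, rfl⟩ := mem_image.1 ht
      rw [eq_partOf hs (mem_map_equiv.1 hx)]⟩

lemma map_mem_map (π : Equiv.Perm (Fin n)) {P : KPartition n k} {s : Finset (Fin n)}
    (hs : s ∈ P.1) : s.map π.toEmbedding ∈ (P.map π).1 :=
  mem_image_of_mem _ hs

end KPartition

open KPartition

lemma kPartitionGraph_colorable {n k : ℕ} (hn : 0 < n) :
    (kPartitionGraph n k).Colorable ((n - 1).choose (k - 1)) := by
  set x : Fin n := ⟨0, hn⟩
  have hcol : ∀ P : KPartition n k,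
      (P.partOf x).erase x ∈ (univ.erase x).powersetCard (k - 1) :=
    fun P => mem_powersetCard.2 ⟨erase_subset_erase _ (subset_univ _),
      by rw [card_erase_of_mem (P.mem_partOf x), P.card_partOf]⟩
  have C : (kPartitionGraph n k).Coloring ((univ.erase x).powersetCard (k - 1)) :=
    Coloring.mk (fun P => ⟨_, hcol P⟩) fun {P Q} hPQ hPQ' => by
      have h : P.partOf x = Q.partOf x := by
        rw [← insert_erase (P.mem_partOf x), ← insert_erase (Q.mem_partOf x)]
        exact congrArg (insert x) (congrArg Subtype.val hPQ')
      exact Finset.disjoint_left.1 hPQ.2 (P.partOf_mem x) (h ▸ Q.partOf_mem x)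
  have hC := C.colorable
  rwa [Fintype.card_coe, card_powersetCard, card_erase_of_mem (mem_univ x), card_univ,
    Fintype.card_fin] at hC

lemma exists_isNClique_kPartitionGraph {n k : ℕ} (hk : 0 < k) (hdvd : k ∣ n) (hkn : k ≤ n) :
    ∃ s, (kPartitionGraph n k).IsNClique ((n - 1).choose (k - 1)) s := by
  classical
  obtain ⟨f, hf⟩ := IsBaranyaiSystem.exists_of_le (ι := Fin ((n - 1).choose (k - 1))) hk hdvd
    (Fintype.card_fin _) le_rfl
  let P : Fin ((n - 1).choose (k - 1)) → KPartition n k := fun i =>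
    ⟨(f i).toFinset, fun S hS => hf.card_eq_of_mem (Multiset.mem_toFinset.1 hS),
      fun x => by simpa using hf.existsUnique_mem i x⟩
  have hdisj : ∀ i j, i ≠ j → Disjoint (P i).1 (P j).1 := fun i j hij =>
    Finset.disjoint_left.2 fun _ hi hj =>
      hij (hf.eq_of_mem_of_mem (Multiset.mem_toFinset.1 hi) (Multiset.mem_toFinset.1 hj))
  have hinj : Function.Injective P := fun i j h => by
    obtain ⟨S, hS⟩ := Multiset.card_pos_iff_exists_mem.1 (hf.card_eq i ▸ Nat.div_pos hkn hk)
    have hS' : S ∈ (P j).1 := h ▸ Multiset.mem_toFinset.2 hS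
    exact hf.eq_of_mem_of_mem hS (Multiset.mem_toFinset.1 hS')
  refine ⟨univ.map ⟨P, hinj⟩, ⟨?_, by simp⟩⟩
  simp only [coe_map, Function.Embedding.coeFn_mk, coe_univ, Set.image_univ]
  rintro _ ⟨i, rfl⟩ _ ⟨j, rfl⟩ hij
  exact ⟨hij, hdisj i j (ne_of_apply_ne P hij)⟩

/-- Swapping two points `u, v` that lie in different parts, both outside a third part `A`,
gives a different partition that still contains `A`. -/
lemma kPartitionGraph_ne_top {n k : ℕ} (hk : 1 < k) (hn : 3 * k ≤ n) (Q : KPartition n k) :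
    kPartitionGraph n k ≠ ⊤ := by
  intro htop
  obtain ⟨a⟩ : Nonempty (Fin n) := ⟨⟨0, by omega⟩⟩
  set A := Q.partOf a
  obtain ⟨u, -, huA⟩ := exists_mem_notMem_of_card_lt_card (s := A) (t := univ)
    (by rw [Q.card_partOf, card_univ, Fintype.card_fin]; omega)
  set B := Q.partOf u
  obtain ⟨v, -, hvAB⟩ := exists_mem_notMem_of_card_lt_card (s := A ∪ B) (t := univ)
    (by have := card_union_le A B; rw [Q.card_partOf, Q.card_partOf] at this
        rw [card_univ, Fintype.card_fin]; omega)
  rw [mem_union, not_or] at hvAB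
  obtain ⟨w, hwB, hwu⟩ := exists_mem_ne (by rw [Q.card_partOf]; omega : 1 < #B) u
  set π := Equiv.swap u v
  have hne : Q.map π ≠ Q := fun h => by
    have hBπ : B.map π.toEmbedding ∈ Q.1 := h ▸ map_mem_map π (Q.partOf_mem u)
    have hw : w ∈ B.map π.toEmbedding := mem_map_equiv.2 <| by
      rwa [Equiv.symm_swap, Equiv.swap_apply_of_ne_of_ne hwu (ne_of_mem_of_not_mem hwB hvAB.2)]
    have hv : v ∈ B.map π.toEmbedding := mem_map_equiv.2 <| by
      rw [Equiv.symm_swap, Equiv.swap_apply_right]; exact Q.mem_partOf u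
    rw [eq_partOf hBπ hw, ← eq_partOf (Q.partOf_mem u) hwB] at hv
    exact hvAB.2 hv
  have hadj : (kPartitionGraph n k).Adj Q (Q.map π) := htop ▸ hne.symm
  have hA : A.map π.toEmbedding ∈ (Q.map π).1 := map_mem_map π (Q.partOf_mem a)
  rw [map_swap_eq_self huA hvAB.1] at hA
  exact Finset.disjoint_left.1 (kPartitionGraph_adj.1 hadj).2 (Q.partOf_mem a) hA

/-- For `k > 1` dividing `n` with `n/k > 2`, the graph on partitions of `{1,...,n}`
into `k`-subsets (adjacent when sharing no part) is non-synchronizing: it is neither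
null nor complete and its chromatic number equals its clique number. -/
theorem stmt_11 (n k : ℕ) (hk : 1 < k) (hdvd : k ∣ n) (hq : 2 < n / k) :
    kPartitionGraph n k ≠ ⊥ ∧ kPartitionGraph n k ≠ ⊤ ∧
      (kPartitionGraph n k).chromaticNumber = ((kPartitionGraph n k).cliqueNum : ℕ∞) := by
  have h3k : 3 * k ≤ n := by
    have := Nat.div_mul_cancel hdvd
    have : 3 * k ≤ n / k * k := Nat.mul_le_mul_right k hq
    omega
  have hN : 2 ≤ (n - 1).choose (k - 1) := by
    have h := Nat.choose_le_choose (k - 1) (by omega : k ≤ n - 1)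
    rw [Nat.choose_symm_of_eq_add (by omega : k = k - 1 + 1), Nat.choose_one_right] at h
    omega
  obtain ⟨s, hs⟩ := exists_isNClique_kPartitionGraph (by omega) hdvd (by omega)
  obtain ⟨P, hP, Q, hQ, hPQ⟩ := one_lt_card.1 (hs.card_eq ▸ hN)
  exact ⟨ne_bot_iff_exists_adj.2 ⟨P, Q, hs.isClique hP hQ hPQ⟩,
    kPartitionGraph_ne_top hk h3k P,
    chromaticNumber_eq_cliqueNum_of_isNClique (kPartitionGraph_colorable (by omega)) hs⟩
end

section
/- Let p be a prime, d > 1, G ≤ AGL(d,p) be a permutation group on V = GF(p)^d containing all translations, with 0-stabilizer H. Suppose there is a hyperplane W of V and a 1-dimensional subspace ℓ such that no subspace in the H-orbit of ℓ lies in W. Define the graph Γ on V joining distinct a, b iff {a,b} is contained in some element of the G-orbit of ℓ (as a subset of V). Then G ≤ Aut(Γ), the cosets of W form the colour classes of a proper vertex p-colouring of Γ, and ℓ is a clique of Γ of size p; hence ω(Γ) = χ(Γ) = p and G is non-synchronizing. -/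
open SimpleGraph

/-- The graph on `V = GF(p)^d` joining distinct `a, b` exactly when `{a,b}` is
contained in some member of the `G`-orbit of the line `ℓ` (as subsets of `V`). -/
def orbitLineGraph (p d : ℕ) [Fact p.Prime]
    (G : Subgroup ((Fin d → ZMod p) ≃ᵃ[ZMod p] (Fin d → ZMod p)))
    (ℓ : Submodule (ZMod p) (Fin d → ZMod p)) : SimpleGraph (Fin d → ZMod p) :=
  SimpleGraph.fromRel (fun a b => ∃ g ∈ G,
    a ∈ ⇑g '' (ℓ : Set (Fin d → ZMod p)) ∧ b ∈ ⇑g '' (ℓ : Set (Fin d → ZMod p)))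

lemma auxCardOfFinrankOne (p : ℕ) [Fact p.Prime] (M : Type*) [AddCommGroup M]
    [Module (ZMod p) M] [Finite M] (h : Module.finrank (ZMod p) M = 1) :
    Nat.card M = p := by
  haveI : Fintype M := Fintype.ofFinite M
  rw [Nat.card_eq_fintype_card, Module.card_eq_pow_finrank (K := ZMod p), h, ZMod.card, pow_one]

lemma auxQuotCard (p d : ℕ) [Fact p.Prime] (hd : 1 ≤ d)
    (W : Submodule (ZMod p) (Fin d → ZMod p)) (hW : Module.finrank (ZMod p) W = d - 1) :
    Nat.card ((Fin d → ZMod p) ⧸ W) = p := by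
  apply auxCardOfFinrankOne
  have := W.finrank_quotient_add_finrank
  rw [hW, Module.finrank_fintype_fun_eq_card, Fintype.card_fin] at this
  omega

/-- Let `p` be prime, `d > 1`, `G ≤ AGL(d,p)` a permutation group on `V = GF(p)^d`
containing all translations, with `0`-stabilizer `H`. Suppose there is a hyperplane
`W` and a `1`-dimensional subspace `ℓ` such that no member of the `H`-orbit of `ℓ`
lies in `W`. Let `Γ` be the graph on `V` joining distinct `a,b` iff `{a,b}` lies in
some member of the `G`-orbit of `ℓ`. Then `G ≤ Aut(Γ)`; the `p` cosets of `W` are the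
colour classes of a proper vertex `p`-colouring of `Γ` (adjacent vertices lie in
distinct cosets); `ℓ` is a clique of `Γ` of size `p`; hence `Γ` is neither null nor
complete and `ω(Γ) = χ(Γ) = p`, so `G` is non-synchronizing. -/
theorem stmt_15 (p d : ℕ) [Fact p.Prime] (hd : 1 < d)
    (G : Subgroup ((Fin d → ZMod p) ≃ᵃ[ZMod p] (Fin d → ZMod p)))
    (htransl : ∀ v : Fin d → ZMod p,
      AffineEquiv.constVAdd (ZMod p) (Fin d → ZMod p) v ∈ G)
    (W : Submodule (ZMod p) (Fin d → ZMod p))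
    (hW : Module.finrank (ZMod p) W = d - 1)
    (ℓ : Submodule (ZMod p) (Fin d → ZMod p))
    (hℓ : Module.finrank (ZMod p) ℓ = 1)
    (hO : ∀ h ∈ G, h 0 = 0 →
      ¬ (⇑h '' (ℓ : Set (Fin d → ZMod p)) ⊆ (W : Set (Fin d → ZMod p)))) :
    (∀ g ∈ G, ∀ a b : Fin d → ZMod p,
        (orbitLineGraph p d G ℓ).Adj (g a) (g b) ↔ (orbitLineGraph p d G ℓ).Adj a b) ∧
      (∀ a b : Fin d → ZMod p, (orbitLineGraph p d G ℓ).Adj a b → a - b ∉ W) ∧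
      Nat.card ((Fin d → ZMod p) ⧸ W) = p ∧
      (orbitLineGraph p d G ℓ).IsClique (ℓ : Set (Fin d → ZMod p)) ∧
      Nat.card ℓ = p ∧
      orbitLineGraph p d G ℓ ≠ ⊥ ∧ orbitLineGraph p d G ℓ ≠ ⊤ ∧
      (orbitLineGraph p d G ℓ).cliqueNum = p ∧
      (orbitLineGraph p d G ℓ).chromaticNumber = (p : ℕ∞) := by
  classical
  have hp : p.Prime := Fact.out
  set V := Fin d → ZMod p
  set Γ := orbitLineGraph p d G ℓ with hΓ
  -- adjacency characterization
  have hadj : ∀ a b : V, Γ.Adj a b ↔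
      a ≠ b ∧ ∃ g ∈ G, a ∈ ⇑g '' (ℓ : Set V) ∧ b ∈ ⇑g '' (ℓ : Set V) := by
    intro a b
    simp only [hΓ, orbitLineGraph, fromRel_adj]
    constructor
    · rintro ⟨hne, h | ⟨g, hg, h1, h2⟩⟩
      · exact ⟨hne, h⟩
      · exact ⟨hne, g, hg, h2, h1⟩
    · rintro ⟨hne, h⟩; exact ⟨hne, Or.inl h⟩
  have hfwd : ∀ g ∈ G, ∀ a b : V, Γ.Adj a b → Γ.Adj (g a) (g b) := by
    intro g hg a b hab
    rw [hadj] at hab ⊢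
    obtain ⟨hne, k, hk, ⟨x, hx, hxa⟩, ⟨y, hy, hyb⟩⟩ := hab
    refine ⟨fun h => hne (g.injective h), g * k, G.mul_mem hg hk,
      ⟨x, hx, ?_⟩, ⟨y, hy, ?_⟩⟩
    · simp [AffineEquiv.coe_mul, hxa]
    · simp [AffineEquiv.coe_mul, hyb]
  have hinv : ∀ g ∈ G, ∀ a b : V, Γ.Adj (g a) (g b) ↔ Γ.Adj a b := by
    intro g hg a b
    constructor
    · intro h
      have := hfwd g⁻¹ (G.inv_mem hg) _ _ h
      have e : ∀ z : V, g⁻¹ (g z) = z := by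
        intro z
        have e1 : g⁻¹ (g z) = (g⁻¹ * g) z := rfl
        rw [e1, inv_mul_cancel]
        rfl
      rwa [e, e] at this
    · exact hfwd g hg a b
  -- the colouring property
  have hcol : ∀ a b : V, Γ.Adj a b → a - b ∉ W := by
    intro a b hab habW
    rw [hadj] at hab
    obtain ⟨hne, g, hg, ⟨x, hx, hxa⟩, ⟨y, hy, hyb⟩⟩ := hab
    set h : V ≃ᵃ[ZMod p] V := AffineEquiv.constVAdd (ZMod p) V (-(g 0)) * g with hh
    have hhG : h ∈ G := G.mul_mem (htransl _) hg
    have happ : ∀ z : V, h z = g z - g 0 := by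
      intro z
      simp [hh, AffineEquiv.coe_mul, sub_eq_neg_add]
    have hh0 : h 0 = 0 := by rw [happ]; simp
    have hlin : ∀ z : V, h z = h.linear z := by
      intro z
      have := h.map_vadd (0 : V) z
      simpa [hh0] using this
    set M : Submodule (ZMod p) V := ℓ.map (h.linear : V →ₗ[ZMod p] V) with hM
    have hMrank : Module.finrank (ZMod p) M = 1 := by
      rw [hM, LinearEquiv.finrank_map_eq]; exact hℓ
    have hmemM : a - b ∈ M := by
      have : a - b = h.linear (x - y) := by
        rw [map_sub, ← hlin, ← hlin, happ, happ, ← hxa, ← hyb]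
        abel
      rw [this]
      exact Submodule.mem_map_of_mem (ℓ.sub_mem hx hy)
    have hne0 : a - b ≠ 0 := sub_ne_zero.mpr hne
    have hspan : Submodule.span (ZMod p) {a - b} = M := by
      apply Submodule.eq_of_le_of_finrank_le
      · rwa [Submodule.span_singleton_le_iff_mem]
      · rw [hMrank, finrank_span_singleton hne0]
    apply hO h hhG hh0
    rintro _ ⟨z, hz, rfl⟩
    have : h z ∈ M := by rw [hlin]; exact Submodule.mem_map_of_mem hz
    rw [← hspan] at this
    have hsub : Submodule.span (ZMod p) {a - b} ≤ W := by
      rwa [Submodule.span_singleton_le_iff_mem]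
    exact hsub this
  have hVrank : Module.finrank (ZMod p) V = d := by
    rw [show Module.finrank (ZMod p) V = Module.finrank (ZMod p) (Fin d → ZMod p) from rfl,
      Module.finrank_fintype_fun_eq_card, Fintype.card_fin]
  -- cardinality of the quotient
  have hqcard : Nat.card (V ⧸ W) = p := auxQuotCard p d hd.le W hW
  obtain ⟨e⟩ : Nonempty ((V ⧸ W) ≃ Fin p) := ⟨Finite.equivFinOfCardEq hqcard⟩
  -- identity in G
  have h1G : (1 : V ≃ᵃ[ZMod p] V) ∈ G := by
    have := htransl 0
    rwa [AffineEquiv.constVAdd_zero] at this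
  -- ℓ is a clique
  have hclique : Γ.IsClique (ℓ : Set V) := by
    intro a ha b hb hne
    rw [hadj]
    exact ⟨hne, 1, h1G, ⟨a, ha, rfl⟩, ⟨b, hb, rfl⟩⟩
  have hℓcard : Nat.card ℓ = p := auxCardOfFinrankOne p ℓ hℓ
  -- two distinct points of ℓ
  haveI : Nontrivial ℓ := by
    rw [← Finite.one_lt_card_iff_nontrivial, hℓcard]
    exact hp.one_lt
  obtain ⟨a₀, b₀, hab₀⟩ := exists_pair_ne ℓ
  have hab₀' : (a₀ : V) ≠ b₀ := fun h => hab₀ (Subtype.ext h)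
  have hadj₀ : Γ.Adj a₀ b₀ := hclique a₀.2 b₀.2 hab₀'
  have hnebot : Γ ≠ ⊥ := by
    intro h
    rw [h] at hadj₀
    exact hadj₀
  -- Γ ≠ ⊤
  have hWne : ∃ w : V, w ∈ W ∧ w ≠ 0 := by
    by_contra hc
    push_neg at hc
    have : W = ⊥ := by
      rw [Submodule.eq_bot_iff]
      intro x hx
      by_contra hx0
      exact hx0 (hc x hx)
    rw [this, finrank_bot] at hW
    omega
  obtain ⟨w, hwW, hw0⟩ := hWne
  have hnetop : Γ ≠ ⊤ := by
    intro h
    have : Γ.Adj 0 w := by rw [h]; exact fun h0 => hw0 h0.symm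
    apply hcol 0 w this
    rw [zero_sub]; exact W.neg_mem hwW
  -- clique number
  have hℓfin : (ℓ : Set V).Finite := Set.toFinite _
  set t : Finset V := hℓfin.toFinset with ht
  have htcoe : (t : Set V) = (ℓ : Set V) := hℓfin.coe_toFinset
  have htcard : t.card = p := by
    rw [← hℓcard, ← Set.ncard_coe_finset, htcoe]
    exact Nat.card_coe_set_eq (ℓ : Set V)
  have htclique : Γ.IsClique (t : Set V) := by rw [htcoe]; exact hclique
  have hub : ∀ s : Finset V, Γ.IsClique (s : Set V) → s.card ≤ p := by
    intro s hs
    have : s.card ≤ (Finset.univ : Finset (Fin p)).card := by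
      apply Finset.card_le_card_of_injOn (fun v => e (Submodule.Quotient.mk v))
        (fun a _ => Finset.mem_univ _)
      intro a ha b hb hq
      by_contra hne
      exact hcol a b (hs ha hb hne) ((Submodule.Quotient.eq W).mp (e.injective hq))
    simpa using this
  have hcliqueNum : Γ.cliqueNum = p := by
    apply le_antisymm
    · apply csSup_le
      · exact ⟨0, ∅, isNClique_empty.mpr rfl⟩
      · rintro n ⟨s, hs⟩
        rw [← hs.2]
        exact hub s hs.1
    · have := SimpleGraph.IsClique.card_le_cliqueNum (G := Γ) (t := t) (tc := htclique)
      rwa [htcard] at this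
  -- chromatic number
  have hchrom : Γ.chromaticNumber = (p : ℕ∞) := by
    apply le_antisymm
    · have hcolorable : Γ.Colorable p :=
        ⟨SimpleGraph.Coloring.mk (fun v => e (Submodule.Quotient.mk v))
          (fun {a b} hab hq =>
            hcol a b hab ((Submodule.Quotient.eq W).mp (e.injective hq)))⟩
      exact hcolorable.chromaticNumber_le
    · have := htclique.card_le_chromaticNumber
      rwa [htcard] at this
  exact ⟨hinv, hcol, hqcard, hclique, hℓcard, hnebot, hnetop, hcliqueNum, hchrom⟩
end
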